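/- In the setting of Theorem 2 (k ≥ 2, G a k-connected graph on n vertices, distinct vertices v₁, …, v_k, positive integers n₁, …, n_k with n₁ + ⋯ + n_k < n, and pairwise disjoint connected subgraphs G₁, …, G_k with |V(G_i)| = n_i and v_i ∈ V(G_i)): if there exists an optimal configuration containing a bridge, then G has pairwise vertex-disjoint connected subgraphs G₁′, G₂′, …, G_k′ such that v_i ∈ V(G_i′) for i = 1, 2, …, k, the subgraph G₁′ has exactly n₁ + 1 vertices, and for each i = 2, 3, …, k the subgraph G_i′ has exactly n_i vertices. -/

import Mathlib

/-!
Induction on the least rank `r` of a bridge `ab`, with `a` outside all parts and `b` in the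
reservoir of a cascade vertex `w` of rank `r` in part `p`. Optimality forces `A p \ {w}` to be the
reservoir of `w`: otherwise some vertex `c` cut off from `v p` by `w` can be deleted with `A p`
staying connected, and exchanging `c` for `a` enlarges the reservoir of `w` without changing
anything of smaller rank. So exchanging `w` for `a` keeps part `p` connected. If `r = 1`, part `0`
then absorbs `w`. If `r > 1`, `w` has a neighbour in the reservoir of a cascade vertex of rank
`r - 1` in another part; after the exchange, with all cascades cut at rank `r - 1`, the
configuration is still `(r - 1)`-optimal and `w` is the outer end of a bridge of smaller rank.
-/

/-- A graph `G` on a finite vertex type is `k`-connected if it has more than `k`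
vertices and remains connected after deleting any set of fewer than `k` vertices. -/
def KConnected {V : Type} [Fintype V] (G : SimpleGraph V) (k : ℕ) : Prop :=
  k < Fintype.card V ∧
    ∀ D : Finset V, D.card < k → (G.induce ((↑D : Set V)ᶜ)).Connected

/-- The reservoir of `w` (inside the part with vertex set `A` and root `vi`):
the set of vertices of `A` connected to `vi` by a path in the graph induced on
`A` minus `w`.  (So `w` is not in its own reservoir, and the reservoir of `vi`
itself is empty.) -/
def reservoir {V : Type} (G : SimpleGraph V) (A : Set V) (vi w : V) : Set V :=
  {u | ∃ (hu : u ∈ A \ {w}) (hv : vi ∈ A \ {w}),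
    (G.induce (A \ {w})).Reachable ⟨vi, hv⟩ ⟨u, hu⟩}

/-- A configuration: pairwise disjoint connected vertex sets `A i` with
`|A i| = m i` and `v i ∈ A i`, together with exactly one cascade `c i` in each
part `i ≠ 0` (the cascade of part `0` is null).  A cascade in part `i` is a
sequence of distinct vertices of `A i`, all different from `v i`, in which each
vertex is not in the reservoir of the previous one. -/
structure Config {V : Type} [Fintype V] (G : SimpleGraph V) (k : ℕ) [NeZero k]
    (v : Fin k → V) (m : Fin k → ℕ) where
  A : Fin k → Set V
  c : Fin k → List V
  disj : Pairwise fun i j => Disjoint (A i) (A j)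
  conn : ∀ i, (G.induce (A i)).Connected
  hcard : ∀ i, (A i).ncard = m i
  hmem : ∀ i, v i ∈ A i
  c_zero : c 0 = []
  c_nodup : ∀ i, (c i).Nodup
  c_mem : ∀ i, ∀ w ∈ c i, w ∈ A i ∧ w ≠ v i
  c_chain : ∀ i, (c i).Chain' fun a b => b ∉ reservoir G (A i) (v i) a

variable {V : Type} [Fintype V] {G : SimpleGraph V} {k : ℕ} [NeZero k]
  {v : Fin k → V} {m : Fin k → ℕ}

/-- A cascade vertex is a vertex belonging to one of the cascades. -/
def IsCascadeVertex (cfg : Config G k v m) (w : V) : Prop :=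
  ∃ i, w ∈ cfg.c i

/-- `RankLink cfg P w` says: `w` is a cascade vertex of some part `i` and there
is a cascade vertex `w'` of a different part `j` satisfying `P` such that `w`
has a neighbor in the reservoir of `w'`. -/
def RankLink (cfg : Config G k v m) (P : V → Prop) (w : V) : Prop :=
  ∃ i j : Fin k, i ≠ j ∧ w ∈ cfg.c i ∧
    ∃ w' ∈ cfg.c j, P w' ∧ ∃ u ∈ reservoir G (cfg.A j) (v j) w', G.Adj w u

/-- `HasRank cfg r w` says the cascade vertex `w` has rank `r`: rank `1` means
`w` has a neighbor in part `0`; otherwise the rank is the least `r ≥ 2` such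
that `w` has a neighbor in the reservoir of a cascade vertex of rank `r - 1`
in a different part. -/
def HasRank (cfg : Config G k v m) : ℕ → V → Prop
  | 0 => fun _ => False
  | 1 => fun w => IsCascadeVertex cfg w ∧ ∃ u ∈ cfg.A 0, G.Adj w u
  | r + 2 => fun w =>
      IsCascadeVertex cfg w ∧ (¬ ∃ u ∈ cfg.A 0, G.Adj w u) ∧
      RankLink cfg (HasRank cfg (r + 1)) w ∧
      ∀ s, s < r → ¬ RankLink cfg (HasRank cfg (s + 1)) w

/-- A configuration is valid if every cascade vertex has a well-defined rank and
the rank is strictly increasing along each cascade. -/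
def Valid (cfg : Config G k v m) : Prop :=
  (∀ w, IsCascadeVertex cfg w → ∃ r, HasRank cfg r w) ∧
  ∀ i, (cfg.c i).Pairwise fun a b =>
    ∀ ra rb, HasRank cfg ra a → HasRank cfg rb b → ra < rb

/-- `rho cfg r` is the total number of vertices belonging to the reservoir of
some cascade vertex of rank `r`. -/
noncomputable def rho (cfg : Config G k v m) (r : ℕ) : ℕ :=
  {u | ∃ i, ∃ w ∈ cfg.c i, HasRank cfg r w ∧
    u ∈ reservoir G (cfg.A i) (v i) w}.ncard

/-- A valid configuration is `r`-optimal if, among all valid configurations, it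
maximizes `rho 1`, subject to that maximizes `rho 2`, and so on up to `rho r`.
(`ROptimal cfg 0` just says the configuration is valid.) -/
def ROptimal (cfg : Config G k v m) : ℕ → Prop
  | 0 => Valid cfg
  | r + 1 => ROptimal cfg r ∧
      ∀ cfg' : Config G k v m, ROptimal cfg' r →
        rho cfg' (r + 1) ≤ rho cfg (r + 1)

/-- A configuration is optimal if it is `r`-optimal for every `r`. -/
def Optimal (cfg : Config G k v m) : Prop := ∀ r, ROptimal cfg r

/-- `u` belongs to the reservoir of some cascade vertex. -/
def InReservoir (cfg : Config G k v m) (u : V) : Prop :=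
  ∃ i, ∃ w ∈ cfg.c i, u ∈ reservoir G (cfg.A i) (v i) w

/-- A bridge: an edge of `G` with one end in
`S = V(G) − V(G₁) − ⋯ − V(G_k)` and the other end in the reservoir of a
cascade vertex. -/
def IsBridgeEdge (cfg : Config G k v m) (a b : V) : Prop :=
  G.Adj a b ∧ (∀ i, a ∉ cfg.A i) ∧ InReservoir cfg b

namespace SimpleGraph

variable {V : Type*} {G : SimpleGraph V} {X Y T : Set V} {x y z : V}

def reachSet (G : SimpleGraph V) (X : Set V) (x : V) : Set V :=
  {u | ∃ (hu : u ∈ X) (hx : x ∈ X), (G.induce X).Reachable ⟨x, hx⟩ ⟨u, hu⟩}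

lemma reachSet_subset : G.reachSet X x ⊆ X := fun _ ⟨hu, _, _⟩ => hu

lemma mem_reachSet_self (hx : x ∈ X) : x ∈ G.reachSet X x := ⟨hx, hx, .refl _⟩

lemma mem_reachSet_of_adj (hy : y ∈ G.reachSet X x) (hz : z ∈ X) (hyz : G.Adj y z) :
    z ∈ G.reachSet X x :=
  let ⟨_, hx, hr⟩ := hy
  ⟨hz, hx, hr.trans (Adj.reachable (G := G.induce X) hyz)⟩

lemma reachSet_subset_of_closed (hT : ∀ t ∈ T, ∀ z ∈ X, G.Adj t z → z ∈ T) (hx : x ∈ T) :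
    G.reachSet X x ⊆ T := by
  rintro u ⟨hu, hxX, hr⟩
  rw [reachable_iff_reflTransGen] at hr
  suffices ∀ z : X, Relation.ReflTransGen (G.induce X).Adj ⟨x, hxX⟩ z → (z : V) ∈ T from
    this _ hr
  intro z hz
  induction hz with
  | refl => exact hx
  | tail _ hyz ih => exact hT _ ih _ (Subtype.prop _) hyz

lemma connected_induce_reachSet (hx : x ∈ X) : (G.induce (G.reachSet X x)).Connected := by
  rw [connected_iff_exists_forall_reachable]
  refine ⟨⟨x, mem_reachSet_self hx⟩, ?_⟩
  rintro ⟨u, hu, -, hr⟩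
  rw [reachable_iff_reflTransGen] at hr
  suffices ∀ z : X, Relation.ReflTransGen (G.induce X).Adj ⟨x, hx⟩ z →
      ∃ hz : (z : V) ∈ G.reachSet X x,
        (G.induce (G.reachSet X x)).Reachable ⟨x, mem_reachSet_self hx⟩ ⟨z, hz⟩ from
    (this _ hr).2
  intro z hz
  induction hz with
  | refl => exact ⟨_, .refl _⟩
  | @tail y z _ hyz ih =>
    obtain ⟨hy, hr⟩ := ih
    have hz := mem_reachSet_of_adj hy z.2 hyz
    exact ⟨hz, hr.trans (Adj.reachable (G := G.induce _) (u := ⟨y, hy⟩) (v := ⟨z, hz⟩) hyz)⟩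

lemma subset_reachSet (hTX : T ⊆ X) (hx : x ∈ T) (hT : (G.induce T).Connected) :
    T ⊆ G.reachSet X x := fun u hu =>
  ⟨hTX hu, hTX hx, (hT.preconnected ⟨x, hx⟩ ⟨u, hu⟩).map (G.induceHomOfLE hTX).toHom⟩

lemma reachSet_subset_reachSet (h : G.reachSet X x ⊆ Y) : G.reachSet X x ⊆ G.reachSet Y x := by
  by_cases hx : x ∈ X
  · exact subset_reachSet h (mem_reachSet_self hx) (connected_induce_reachSet hx)
  · rintro u ⟨-, hx', -⟩
    exact absurd hx' hx

lemma Connected.reachSet_eq (hX : (G.induce X).Connected) (hx : x ∈ X) : G.reachSet X x = X :=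
  reachSet_subset.antisymm (subset_reachSet subset_rfl hx hX)

lemma Connected.subset_of_closed (hX : (G.induce X).Connected) (hx : x ∈ X) (hxT : x ∈ T)
    (hT : ∀ t ∈ T, ∀ z ∈ X, G.Adj t z → z ∈ T) : X ⊆ T :=
  hX.reachSet_eq hx ▸ reachSet_subset_of_closed hT hxT

lemma Connected.induce_insert (hX : (G.induce X).Connected) (hx : x ∈ X) (hxy : G.Adj x y) :
    (G.induce (insert y X)).Connected := by
  rw [Set.insert_eq, Set.union_comm]
  exact connected_induce_union hX.preconnected Preconnected.of_subsingleton hx rfl hxy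

/-- A vertex farthest from `x` is not a cut vertex. -/
lemma Connected.exists_connected_induce_diff_singleton (hfin : X.Finite)
    (hX : (G.induce X).Connected) (hx : x ∈ X) (hy : y ∈ X) (hyx : y ≠ x) :
    ∃ c ∈ X, c ≠ x ∧ (G.induce (X \ {c})).Connected := by
  classical
  have := hfin.to_subtype
  set x' : X := ⟨x, hx⟩
  have : Nonempty X := ⟨x'⟩
  obtain ⟨c, hc⟩ := Finite.exists_max fun z : X => (G.induce X).dist z x'
  have hcx : c ≠ x' := by
    rintro rfl
    have := hc ⟨y, hy⟩
    rw [dist_self, Nat.le_zero, hX.dist_eq_zero_iff] at this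
    exact hyx (congrArg Subtype.val this)
  have avoid : ∀ z : X, z ≠ c → ∃ p : (G.induce X).Walk z x', c ∉ p.support := by
    intro z hz
    obtain ⟨p, hp⟩ := hX.exists_walk_length_eq_dist z x'
    refine ⟨p, fun hmem => ?_⟩
    have hsplit : (p.takeUntil c hmem).length + (p.dropUntil c hmem).length = p.length := by
      rw [← Walk.length_append, p.take_spec]
    have htake : (p.takeUntil c hmem).length ≠ 0 := fun h => hz (Walk.eq_of_length_eq_zero h)
    have := dist_le (p.dropUntil c hmem)
    have := hc z
    omega
  refine ⟨c, c.2, fun h => hcx (Subtype.ext h), ?_⟩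
  rw [connected_iff_exists_forall_reachable]
  refine ⟨⟨x, hx, fun h => hcx (Subtype.ext h.symm)⟩, fun ⟨z, hzX, hzc⟩ => ?_⟩
  obtain ⟨p, hp⟩ := avoid ⟨z, hzX⟩ fun h => hzc (congrArg Subtype.val h)
  have hsupp : ∀ u ∈ (p.map (Embedding.induce X).toHom).support, u ∈ X \ {(c : V)} := by
    simp only [Walk.support_map, List.mem_map]
    rintro _ ⟨u, hu, rfl⟩
    exact ⟨u.2, fun h => hp (Subtype.ext h ▸ hu)⟩
  exact ((p.map (Embedding.induce X).toHom).induce _ hsupp).reachable.symm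

end SimpleGraph

section Reservoir

open SimpleGraph

variable {V : Type} {G : SimpleGraph V} {A : Set V} {vi w x y a u z : V}

lemma reservoir_subset_diff : reservoir G A vi w ⊆ A \ {w} := reachSet_subset

lemma notMem_reservoir_self : w ∉ reservoir G A vi w := fun h => (reservoir_subset_diff h).2 rfl

lemma mem_reservoir_root (hvi : vi ∈ A) (hviw : vi ≠ w) : vi ∈ reservoir G A vi w :=
  mem_reachSet_self ⟨hvi, hviw⟩

lemma mem_reservoir_of_adj (hu : u ∈ reservoir G A vi w) (hz : z ∈ A) (hzw : z ≠ w)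
    (huz : G.Adj u z) : z ∈ reservoir G A vi w :=
  mem_reachSet_of_adj hu ⟨hz, hzw⟩ huz

lemma connected_induce_reservoir (hvi : vi ∈ A) (hviw : vi ≠ w) :
    (G.induce (reservoir G A vi w)).Connected :=
  connected_induce_reachSet ⟨hvi, hviw⟩

lemma reservoir_eq_diff_of_connected (hA : (G.induce (A \ {w})).Connected) (hvi : vi ∈ A)
    (hviw : vi ≠ w) : reservoir G A vi w = A \ {w} :=
  hA.reachSet_eq ⟨hvi, hviw⟩

lemma reservoir_subset_of_notMem (h : y ∉ reservoir G A vi x) :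
    reservoir G A vi x ⊆ reservoir G A vi y :=
  reachSet_subset_reachSet fun _ hu =>
    ⟨(reservoir_subset_diff hu).1, fun e => h (Set.mem_singleton_iff.mp e ▸ hu)⟩

lemma exists_adj_reservoir (hA : (G.induce A).Connected) (hvi : vi ∈ A) (hw : w ∈ A)
    (hviw : vi ≠ w) : ∃ u ∈ reservoir G A vi w, G.Adj u w := by
  by_contra! h
  have hclosed : ∀ t ∈ reservoir G A vi w, ∀ z ∈ A, G.Adj t z → z ∈ reservoir G A vi w :=
    fun t ht z hz htz => mem_reservoir_of_adj ht hz (by rintro rfl; exact h t ht htz) htz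
  exact notMem_reservoir_self (hA.subset_of_closed hvi (mem_reservoir_root hvi hviw) hclosed hw)

lemma reservoir_subset_reservoir_insert_diff (hx : x ∉ reservoir G A vi y) :
    reservoir G A vi y ⊆ reservoir G (insert a (A \ {x})) vi y :=
  reachSet_subset_reachSet fun _ hu =>
    ⟨Or.inr ⟨(reservoir_subset_diff hu).1, fun e => hx (Set.mem_singleton_iff.mp e ▸ hu)⟩,
      (reservoir_subset_diff hu).2⟩

lemma reservoir_insert_diff_eq (hvi : vi ∈ A) (hviy : vi ≠ y) (hx : x ∉ reservoir G A vi y)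
    (ha : ∀ u ∈ reservoir G A vi y, ¬ G.Adj a u) :
    reservoir G (insert a (A \ {x})) vi y = reservoir G A vi y := by
  refine (reachSet_subset_of_closed ?_ (mem_reservoir_root hvi hviy)).antisymm
    (reservoir_subset_reservoir_insert_diff hx)
  rintro t ht z ⟨rfl | hz, hzy⟩ htz
  · exact absurd htz.symm (ha t ht)
  · exact mem_reservoir_of_adj ht hz.1 hzy htz

lemma connected_induce_diff_reservoir (hA : (G.induce A).Connected) (hvi : vi ∈ A) (hw : w ∈ A)
    (hviw : vi ≠ w) : (G.induce (A \ reservoir G A vi w)).Connected := by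
  set X := A \ reservoir G A vi w
  have hwX : w ∈ X := ⟨hw, notMem_reservoir_self⟩
  have hcover : A ⊆ reservoir G A vi w ∪ G.reachSet X w := by
    refine hA.subset_of_closed hvi (Or.inl (mem_reservoir_root hvi hviw)) ?_
    rintro t (ht | ht) z hz htz
    · rcases eq_or_ne z w with rfl | hzw
      · exact Or.inr (mem_reachSet_self hwX)
      · exact Or.inl (mem_reservoir_of_adj ht hz hzw htz)
    · by_cases hzR : z ∈ reservoir G A vi w
      · exact Or.inl hzR
      · exact Or.inr (mem_reachSet_of_adj ht ⟨hz, hzR⟩ htz)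
  have hX : G.reachSet X w = X :=
    reachSet_subset.antisymm fun u hu => (hcover hu.1).resolve_left hu.2
  exact hX ▸ connected_induce_reachSet hwX

lemma exists_connected_induce_diff_of_notMem_reservoir (hfin : A.Finite)
    (hA : (G.induce A).Connected) (hvi : vi ∈ A) (hw : w ∈ A) (hviw : vi ≠ w) (hy : y ∈ A \ {w})
    (hyR : y ∉ reservoir G A vi w) :
    ∃ c ∈ A, c ≠ w ∧ c ∉ reservoir G A vi w ∧ (G.induce (A \ {c})).Connected := by
  obtain ⟨c, ⟨hcA, hcR⟩, hcw, hXc⟩ :=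
    (connected_induce_diff_reservoir hA hvi hw hviw).exists_connected_induce_diff_singleton
      hfin.sdiff ⟨hw, notMem_reservoir_self⟩ ⟨hy.1, hyR⟩ hy.2
  refine ⟨c, hcA, hcw, hcR, ?_⟩
  obtain ⟨u, hu, huw⟩ := exists_adj_reservoir hA hvi hw hviw
  have hsplit : A \ {c} = reservoir G A vi w ∪ (A \ reservoir G A vi w) \ {c} := by
    ext z
    by_cases hzR : z ∈ reservoir G A vi w
    · have hzc : z ≠ c := by rintro rfl; exact hcR hzR
      simp [hzR, hzc, (reservoir_subset_diff hzR).1]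
    · simp [hzR]
  rw [hsplit]
  exact connected_induce_union (connected_induce_reservoir hvi hviw).preconnected
    hXc.preconnected hu ⟨⟨hw, notMem_reservoir_self⟩, hcw.symm⟩ huw

end Reservoir

def CanGrowFirstPart {V : Type} (G : SimpleGraph V) {k : ℕ} [NeZero k] (v : Fin k → V)
    (m : Fin k → ℕ) : Prop :=
  ∃ B : Fin k → Set V,
    (Pairwise fun i j => Disjoint (B i) (B j)) ∧
    (∀ i, (G.induce (B i)).Connected) ∧
    (∀ i, v i ∈ B i) ∧
    (B 0).ncard = m 0 + 1 ∧
    (∀ i, i ≠ 0 → (B i).ncard = m i)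

lemma pairwise_disjoint_update {ι α : Type*} [DecidableEq ι] {A : ι → Set α}
    (hA : Pairwise fun i j => Disjoint (A i) (A j)) {p : ι} {S : Set α}
    (hS : ∀ j, j ≠ p → Disjoint S (A j)) :
    Pairwise fun i j => Disjoint (Function.update A p S i) (Function.update A p S j) := by
  intro i j hij
  rcases eq_or_ne i p with rfl | hi
  · simpa [Function.update_of_ne hij.symm] using hS j hij.symm
  rcases eq_or_ne j p with rfl | hj
  · simpa [Function.update_of_ne hij] using (hS i hi).symm
  · simpa [Function.update_of_ne hi, Function.update_of_ne hj] using hA hij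

lemma notMem_update_insert_diff {ι α : Type*} [DecidableEq ι] {A : ι → Set α}
    (hA : Pairwise fun i j => Disjoint (A i) (A j)) {p : ι} {x a : α} (hx : x ∈ A p)
    (ha : a ∉ A p) (i : ι) : x ∉ Function.update A p (insert a (A p \ {x})) i := by
  rcases eq_or_ne i p with rfl | hi
  · rw [Function.update_self]
    rintro (rfl | h)
    · exact ha hx
    · exact h.2 rfl
  · rw [Function.update_of_ne hi]
    exact Set.disjoint_left.mp (hA hi.symm) hx

lemma List.Pairwise.rel_or_rel {α : Type*} {R : α → α → Prop} {l : List α} (h : l.Pairwise R)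
    {a b : α} (ha : a ∈ l) (hb : b ∈ l) (hab : a ≠ b) : R a b ∨ R b a :=
  have : Std.Symm fun c d : α => R c d ∨ R d c := ⟨fun _ _ h => h.symm⟩
  (h.imp Or.inl : l.Pairwise fun c d => R c d ∨ R d c).forall ha hb hab

variable {cfg cfg' : Config G k v m} {i j p : Fin k} {r s t N : ℕ} {a b u w x y : V}

lemma Config.canGrowFirstPart_of_adj (cfg : Config G k v m) (hw : ∀ i, w ∉ cfg.A i)
    (hu : u ∈ cfg.A 0) (huw : G.Adj u w) : CanGrowFirstPart G v m := by
  classical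
  refine ⟨Function.update cfg.A 0 (insert w (cfg.A 0)), pairwise_disjoint_update cfg.disj
    fun j hj => Set.disjoint_insert_left.mpr ⟨hw j, cfg.disj hj.symm⟩, ?_, ?_, ?_, ?_⟩
  · rw [Function.forall_update_iff (p := fun _ B => (G.induce B).Connected)]
    exact ⟨(cfg.conn 0).induce_insert hu huw, fun i _ => cfg.conn i⟩
  · rw [Function.forall_update_iff (p := fun i B => v i ∈ B)]
    exact ⟨Or.inr (cfg.hmem 0), fun i _ => cfg.hmem i⟩
  · rw [Function.update_self, Set.ncard_insert_of_notMem (hw 0), cfg.hcard]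
  · intro i hi
    rw [Function.update_of_ne hi, cfg.hcard]

lemma not_hasRank_zero : ¬ HasRank cfg 0 x := by simp [HasRank]

lemma hasRank_one_iff : HasRank cfg 1 x ↔ IsCascadeVertex cfg x ∧ ∃ u ∈ cfg.A 0, G.Adj x u := by
  rw [HasRank]

lemma hasRank_add_two_iff : HasRank cfg (r + 2) x ↔
    IsCascadeVertex cfg x ∧ (¬ ∃ u ∈ cfg.A 0, G.Adj x u) ∧
      RankLink cfg (HasRank cfg (r + 1)) x ∧
      ∀ s, s < r → ¬ RankLink cfg (HasRank cfg (s + 1)) x := by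
  rw [HasRank]

lemma HasRank.isCascadeVertex (h : HasRank cfg s x) : IsCascadeVertex cfg x := by
  match s with
  | 0 => exact absurd h not_hasRank_zero
  | 1 => exact (hasRank_one_iff.mp h).1
  | _ + 2 => exact (hasRank_add_two_iff.mp h).1

lemma HasRank.unique (hs : HasRank cfg s x) (ht : HasRank cfg t x) : s = t := by
  match s, t with
  | 0, _ => exact absurd hs not_hasRank_zero
  | _, 0 => exact absurd ht not_hasRank_zero
  | 1, 1 => rfl
  | 1, _ + 2 => exact absurd (hasRank_one_iff.mp hs).2 (hasRank_add_two_iff.mp ht).2.1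
  | _ + 2, 1 => exact absurd (hasRank_one_iff.mp ht).2 (hasRank_add_two_iff.mp hs).2.1
  | s + 2, t + 2 =>
    have hs := hasRank_add_two_iff.mp hs
    have ht := hasRank_add_two_iff.mp ht
    rcases lt_trichotomy s t with h | rfl | h
    · exact absurd hs.2.2.1 (ht.2.2.2 s h)
    · rfl
    · exact absurd ht.2.2.1 (hs.2.2.2 t h)

lemma Config.eq_of_mem_c (hi : x ∈ cfg.c i) (hj : x ∈ cfg.c j) : i = j := by
  by_contra hij
  exact Set.disjoint_left.mp (cfg.disj hij) (cfg.c_mem i x hi).1 (cfg.c_mem j x hj).1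

lemma Config.ne_zero_of_mem_c (hx : x ∈ cfg.c p) : p ≠ 0 := by
  rintro rfl
  simp [cfg.c_zero] at hx

lemma Config.pairwise_reservoir (i : Fin k) : (cfg.c i).Pairwise fun x y =>
    reservoir G (cfg.A i) (v i) x ⊆ reservoir G (cfg.A i) (v i) y ∧
      y ∉ reservoir G (cfg.A i) (v i) x := by
  let R : V → V → Prop := fun x y =>
    reservoir G (cfg.A i) (v i) x ⊆ reservoir G (cfg.A i) (v i) y ∧
      y ∉ reservoir G (cfg.A i) (v i) x
  have : Trans R R R := ⟨fun hxy hyz => ⟨hxy.1.trans hyz.1, fun h => hyz.2 (hxy.1 h)⟩⟩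
  exact List.isChain_iff_pairwise.mp
    ((cfg.c_chain i).imp fun _ _ h => ⟨reservoir_subset_of_notMem h, h⟩)

lemma Valid.reservoir_subset_of_lt (hvalid : Valid cfg) (hy : y ∈ cfg.c p) (hw : w ∈ cfg.c p)
    (hry : HasRank cfg s y) (hrw : HasRank cfg r w) (hsr : s < r) :
    reservoir G (cfg.A p) (v p) y ⊆ reservoir G (cfg.A p) (v p) w ∧
      w ∉ reservoir G (cfg.A p) (v p) y := by
  have hyw : y ≠ w := by rintro rfl; exact hsr.ne (hry.unique hrw)
  rcases ((cfg.pairwise_reservoir p).and (hvalid.2 p)).rel_or_rel hy hw hyw with h | h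
  · exact h.1
  · exact absurd (h.2 r s hrw hry) hsr.not_gt

lemma Valid.eq_of_hasRank (hvalid : Valid cfg) (hy : y ∈ cfg.c p) (hw : w ∈ cfg.c p)
    (hry : HasRank cfg r y) (hrw : HasRank cfg r w) : y = w := by
  by_contra hyw
  rcases (hvalid.2 p).rel_or_rel hy hw hyw with h | h
  · exact (h r r hry hrw).false
  · exact (h r r hrw hry).false

lemma ROptimal.valid : ∀ {r}, ROptimal cfg r → Valid cfg
  | 0, h => h
  | _ + 1, h => h.1.valid

lemma ROptimal.mono (h : ROptimal cfg r) (hsr : s ≤ r) : ROptimal cfg s := by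
  induction hsr with
  | refl => exact h
  | step _ ih => exact ih h.1

lemma ROptimal.of_rho_eq (h : ROptimal cfg r) (hvalid : Valid cfg')
    (heq : ∀ s ≤ r, rho cfg' s = rho cfg s) : ROptimal cfg' r := by
  induction r with
  | zero => exact hvalid
  | succ r ih =>
    refine ⟨ih h.1 fun s hs => heq s (by omega), fun cfg'' h'' => ?_⟩
    rw [heq (r + 1) le_rfl]
    exact h.2 cfg'' h''

structure AgreesUpTo (cfg cfg' : Config G k v m) (N : ℕ) : Prop where
  A_zero : cfg'.A 0 = cfg.A 0
  sublist : ∀ i, (cfg'.c i).Sublist (cfg.c i)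
  mem_c_of_hasRank : ∀ i x s, x ∈ cfg.c i → HasRank cfg s x → s ≤ N → x ∈ cfg'.c i
  exists_hasRank : ∀ i x, x ∈ cfg'.c i → ∃ s ≤ N, HasRank cfg s x
  reservoir_eq : ∀ i x s, x ∈ cfg'.c i → HasRank cfg s x → s < N →
    reservoir G (cfg'.A i) (v i) x = reservoir G (cfg.A i) (v i) x

namespace AgreesUpTo

variable (h : AgreesUpTo cfg cfg' N)
include h

lemma isCascadeVertex (hx : HasRank cfg s x) (hs : s ≤ N) : IsCascadeVertex cfg' x :=
  let ⟨i, hxi⟩ := hx.isCascadeVertex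
  ⟨i, h.mem_c_of_hasRank i x s hxi hx hs⟩

lemma rankLink_iff (hx : x ∈ cfg'.c i) (ht : t < N)
    (hrank : ∀ y, HasRank cfg' t y ↔ HasRank cfg t y) :
    RankLink cfg' (HasRank cfg' t) x ↔ RankLink cfg (HasRank cfg t) x := by
  constructor
  · rintro ⟨i, j, hij, hxi, w, hw, hrw, u, hu, hxu⟩
    have hrw := (hrank w).mp hrw
    exact ⟨i, j, hij, (h.sublist i).subset hxi, w, (h.sublist j).subset hw, hrw, u,
      h.reservoir_eq j w t hw hrw ht ▸ hu, hxu⟩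
  · rintro ⟨i', j, hij, hxi', w, hw, hrw, u, hu, hxu⟩
    obtain rfl := Config.eq_of_mem_c hxi' ((h.sublist i).subset hx)
    have hw' := h.mem_c_of_hasRank j w t hw hrw ht.le
    exact ⟨i', j, hij, hx, w, hw', (hrank w).mpr hrw, u,
      (h.reservoir_eq j w t hw' hrw ht).symm ▸ hu, hxu⟩

lemma hasRank_iff : ∀ s ≤ N, ∀ x, HasRank cfg' s x ↔ HasRank cfg s x := by
  intro s
  induction s using Nat.strong_induction_on with | _ s ih => ?_
  intro hs x
  suffices IsCascadeVertex cfg' x → (HasRank cfg' s x ↔ HasRank cfg s x) from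
    ⟨fun hx => (this hx.isCascadeVertex).mp hx, fun hx => (this (h.isCascadeVertex hx hs)).mpr hx⟩
  rintro ⟨i, hx⟩
  have hcv' : IsCascadeVertex cfg' x := ⟨i, hx⟩
  have hcv : IsCascadeVertex cfg x := ⟨i, (h.sublist i).subset hx⟩
  match s with
  | 0 => exact iff_of_false not_hasRank_zero not_hasRank_zero
  | 1 => simp only [hasRank_one_iff, h.A_zero, iff_true_intro hcv, iff_true_intro hcv']
  | t + 2 =>
    have link : ∀ t' < t + 1, RankLink cfg' (HasRank cfg' (t' + 1)) x ↔
        RankLink cfg (HasRank cfg (t' + 1)) x :=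
      fun t' ht' => h.rankLink_iff hx (by omega) (ih (t' + 1) (by omega) (by omega))
    simp only [hasRank_add_two_iff, h.A_zero, iff_true_intro hcv, iff_true_intro hcv', true_and,
      link t (by omega)]
    exact and_congr_right' (and_congr_right' (forall_congr' fun t' => imp_congr_right
      fun ht' => not_congr (link t' (by omega))))

lemma hasRank_of_mem (hx : x ∈ cfg'.c i) (hrx : HasRank cfg' s x) : HasRank cfg s x := by
  obtain ⟨s', hs', hrx'⟩ := h.exists_hasRank i x hx
  rwa [hrx.unique ((h.hasRank_iff s' hs' x).mpr hrx')]

lemma valid (hvalid : Valid cfg) : Valid cfg' := by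
  refine ⟨fun x ⟨i, hx⟩ => ?_, fun i => ?_⟩
  · obtain ⟨s, hs, hrx⟩ := h.exists_hasRank i x hx
    exact ⟨s, (h.hasRank_iff s hs x).mpr hrx⟩
  · refine ((hvalid.2 i).sublist (h.sublist i)).imp_of_mem fun hx hy hlt s t hrx hry => ?_
    exact hlt s t (h.hasRank_of_mem hx hrx) (h.hasRank_of_mem hy hry)

lemma rho_eq (hs : s ≤ N) (hres : ∀ i x, x ∈ cfg'.c i → HasRank cfg s x →
      reservoir G (cfg'.A i) (v i) x = reservoir G (cfg.A i) (v i) x) :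
    rho cfg' s = rho cfg s := by
  unfold rho
  congr 1
  ext u
  constructor
  · rintro ⟨i, x, hx, hrx, hu⟩
    have hrx := (h.hasRank_iff s hs x).mp hrx
    exact ⟨i, x, (h.sublist i).subset hx, hrx, hres i x hx hrx ▸ hu⟩
  · rintro ⟨i, x, hx, hrx, hu⟩
    have hx' := h.mem_c_of_hasRank i x s hx hrx hs
    exact ⟨i, x, hx', (h.hasRank_iff s hs x).mpr hrx, (hres i x hx' hrx).symm ▸ hu⟩

lemma rOptimal (hopt : ROptimal cfg r) (hr : r < N) : ROptimal cfg' r :=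
  hopt.of_rho_eq (h.valid hopt.valid) fun s hs =>
    h.rho_eq (by omega) fun i x hx hrx => h.reservoir_eq i x s hx hrx (by omega)

lemma rho_lt (hsub : ∀ i x, x ∈ cfg'.c i → HasRank cfg N x →
      reservoir G (cfg.A i) (v i) x ⊆ reservoir G (cfg'.A i) (v i) x)
    (ha : ∀ i, a ∉ cfg.A i) (hw : w ∈ cfg'.c p) (hrw : HasRank cfg N w)
    (haw : a ∈ reservoir G (cfg'.A p) (v p) w) : rho cfg N < rho cfg' N := by
  refine Set.ncard_lt_ncard ((Set.ssubset_iff_of_subset ?_).mpr ⟨a, ?_, ?_⟩) (Set.toFinite _)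
  · rintro u ⟨i, x, hx, hrx, hu⟩
    have hx' := h.mem_c_of_hasRank i x N hx hrx le_rfl
    exact ⟨i, x, hx', (h.hasRank_iff N le_rfl x).mpr hrx, hsub i x hx' hrx hu⟩
  · exact ⟨p, w, hw, (h.hasRank_iff N le_rfl w).mpr hrw, haw⟩
  · rintro ⟨i, x, -, -, hax⟩
    exact ha i (reservoir_subset_diff hax).1

end AgreesUpTo

lemma Config.reservoir_update_insert_diff (cfg : Config G k v m) (hy : y ∈ cfg.c i)
    (h : i = p → x ∉ reservoir G (cfg.A p) (v p) y ∧
      ∀ u ∈ reservoir G (cfg.A p) (v p) y, ¬ G.Adj a u) :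
    reservoir G (Function.update cfg.A p (insert a (cfg.A p \ {x})) i) (v i) y =
      reservoir G (cfg.A i) (v i) y := by
  rcases eq_or_ne i p with rfl | hi
  · rw [Function.update_self]
    exact reservoir_insert_diff_eq (cfg.hmem i) (cfg.c_mem i y hy).2.symm (h rfl).1 (h rfl).2
  · rw [Function.update_of_ne hi]

open scoped Classical in
lemma Valid.exists_exchange (hvalid : Valid cfg) (hp : p ≠ 0) (hx : x ∈ cfg.A p) (hxv : x ≠ v p)
    (ha : ∀ i, a ∉ cfg.A i) (hconn : (G.induce (insert a (cfg.A p \ {x}))).Connected)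
    (hkeep : ∀ y ∈ cfg.c p, ∀ s ≤ N, HasRank cfg s y → y ≠ x)
    (hlow : ∀ y ∈ cfg.c p, ∀ s < N, HasRank cfg s y →
      x ∉ reservoir G (cfg.A p) (v p) y ∧ ∀ u ∈ reservoir G (cfg.A p) (v p) y, ¬ G.Adj a u) :
    ∃ cfg' : Config G k v m,
      cfg'.A = Function.update cfg.A p (insert a (cfg.A p \ {x})) ∧ AgreesUpTo cfg cfg' N := by
  set keep : V → Bool := fun y => decide (∃ s ≤ N, HasRank cfg s y)
  have hmem : ∀ i y, y ∈ (cfg.c i).filter keep ↔ y ∈ cfg.c i ∧ ∃ s ≤ N, HasRank cfg s y := by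
    simp [keep]
  have hres : ∀ i y s, y ∈ cfg.c i → HasRank cfg s y → s < N →
      reservoir G (Function.update cfg.A p (insert a (cfg.A p \ {x})) i) (v i) y =
        reservoir G (cfg.A i) (v i) y :=
    fun i y s hy hry hs => cfg.reservoir_update_insert_diff hy fun hi => hlow y (hi ▸ hy) s hs hry
  refine ⟨{
    A := Function.update cfg.A p (insert a (cfg.A p \ {x}))
    c := fun i => (cfg.c i).filter keep
    disj := pairwise_disjoint_update cfg.disj fun j hj =>
      Set.disjoint_insert_left.mpr ⟨ha j, (cfg.disj hj.symm).mono_left Set.sdiff_subset⟩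
    conn := (Function.forall_update_iff cfg.A (p := fun _ B => (G.induce B).Connected)).mpr
      ⟨hconn, fun i _ => cfg.conn i⟩
    hcard := (Function.forall_update_iff cfg.A (p := fun i B => B.ncard = m i)).mpr
      ⟨(Set.ncard_exchange (ha p) hx).trans (cfg.hcard p), fun i _ => cfg.hcard i⟩
    hmem := (Function.forall_update_iff cfg.A (p := fun i B => v i ∈ B)).mpr
      ⟨Or.inr ⟨cfg.hmem p, hxv.symm⟩, fun i _ => cfg.hmem i⟩
    c_zero := by simp [cfg.c_zero]
    c_nodup := fun i => (cfg.c_nodup i).filter keep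
    c_mem := fun i y hy => ?_
    c_chain := fun i => ?_ }, rfl, ?_⟩
  · obtain ⟨hy, s, hs, hry⟩ := (hmem i y).mp hy
    refine ⟨?_, (cfg.c_mem i y hy).2⟩
    rcases eq_or_ne i p with rfl | hi
    · rw [Function.update_self]
      exact Or.inr ⟨(cfg.c_mem i y hy).1, hkeep y hy s hs hry⟩
    · rw [Function.update_of_ne hi]
      exact (cfg.c_mem i y hy).1
  · refine List.Pairwise.isChain ((((cfg.pairwise_reservoir i).and (hvalid.2 i)).filter keep)
      |>.imp_of_mem fun hy hz hyz => ?_)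
    obtain ⟨hy, sy, -, hry⟩ := (hmem i _).mp hy
    obtain ⟨-, sz, hsz, hrz⟩ := (hmem i _).mp hz
    rw [hres i _ sy hy hry ((hyz.2 sy sz hry hrz).trans_le hsz)]
    exact hyz.1.2
  · exact ⟨Function.update_of_ne hp.symm _ _, fun i => List.filter_sublist,
      fun i y s hy hry hs => (hmem i y).mpr ⟨hy, s, hs, hry⟩, fun i y hy => ((hmem i y).mp hy).2,
      fun i y s hy hry hs => hres i y s ((hmem i y).mp hy).1 hry hs⟩

def AdjReservoirOfRank (cfg : Config G k v m) (s : ℕ) (a : V) : Prop :=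
  ∃ i, ∃ y ∈ cfg.c i, HasRank cfg s y ∧ ∃ u ∈ reservoir G (cfg.A i) (v i) y, G.Adj a u

/-- Otherwise `y` would precede `w` in the cascade, yet `w` lies in the reservoir of `y`. -/
lemma Valid.ne_of_connected_induce_diff (hvalid : Valid cfg) (hw : w ∈ cfg.c p)
    (hrw : HasRank cfg r w) (hc : (G.induce (cfg.A p \ {y})).Connected) (hyw : y ≠ w)
    (hy : y ∈ cfg.c p) (hs : s ≤ r) : ¬ HasRank cfg s y := by
  intro hry
  have hsr : s < r := hs.lt_of_ne fun h => hyw (hvalid.eq_of_hasRank hy hw (h ▸ hry) hrw)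
  refine (hvalid.reservoir_subset_of_lt hy hw hry hrw hsr).2 ?_
  rw [reservoir_eq_diff_of_connected hc (cfg.hmem p) (cfg.c_mem p y hy).2.symm]
  exact ⟨(cfg.c_mem p w hw).1, hyw.symm⟩

lemma ROptimal.reservoir_eq_diff (hopt : ROptimal cfg r) (ha : ∀ i, a ∉ cfg.A i)
    (hw : w ∈ cfg.c p) (hrw : HasRank cfg r w) (hb : b ∈ reservoir G (cfg.A p) (v p) w)
    (hab : G.Adj a b) (hlow : ∀ s < r, ¬ AdjReservoirOfRank cfg s a) :
    reservoir G (cfg.A p) (v p) w = cfg.A p \ {w} := by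
  have hvalid := hopt.valid
  obtain ⟨hwA, hwv⟩ := cfg.c_mem p w hw
  refine reservoir_subset_diff.antisymm fun y hy => ?_
  by_contra hyR
  obtain ⟨c, hcA, hcw, hcR, hconn⟩ := exists_connected_induce_diff_of_notMem_reservoir
    (Set.toFinite _) (cfg.conn p) (cfg.hmem p) hwA hwv.symm hy hyR
  have hcv : c ≠ v p := by
    rintro rfl
    exact hcR (mem_reservoir_root (cfg.hmem p) hwv.symm)
  have hconn' : (G.induce (insert a (cfg.A p \ {c}))).Connected :=
    hconn.induce_insert ⟨(reservoir_subset_diff hb).1, fun h => hcR (h ▸ hb)⟩ hab.symm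
  obtain ⟨cfg', hA', hag⟩ := hvalid.exists_exchange (N := r) (cfg.ne_zero_of_mem_c hw) hcA hcv ha
    hconn' (fun y hy s hs hry hyc => hvalid.ne_of_connected_induce_diff hw hrw (hyc ▸ hconn)
      (hyc ▸ hcw) hy hs hry)
    fun y hy s hs hry => ⟨fun h => hcR ((hvalid.reservoir_subset_of_lt hy hw hry hrw hs).1 h),
      fun u hu hau => hlow s hs ⟨p, y, hy, hry, u, hu, hau⟩⟩
  obtain ⟨r, rfl⟩ : ∃ r', r = r' + 1 :=
    Nat.exists_eq_add_one_of_ne_zero (by rintro rfl; exact not_hasRank_zero hrw)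
  have hgrow : ∀ i x, x ∈ cfg'.c i → HasRank cfg (r + 1) x →
      reservoir G (cfg.A i) (v i) x ⊆ reservoir G (cfg'.A i) (v i) x := by
    intro i x hx hrx
    rw [hA']
    rcases eq_or_ne i p with rfl | hi
    · rw [Function.update_self, hvalid.eq_of_hasRank ((hag.sublist i).subset hx) hw hrx hrw]
      exact reservoir_subset_reservoir_insert_diff hcR
    · rw [Function.update_of_ne hi]
  have haw : a ∈ reservoir G (cfg'.A p) (v p) w := by
    rw [hA', Function.update_self]
    exact mem_reservoir_of_adj (reservoir_subset_reservoir_insert_diff hcR hb) (Set.mem_insert a _)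
      (fun h => ha p (h ▸ hwA)) hab.symm
  exact (hopt.2 cfg' (hag.rOptimal hopt.1 r.lt_succ_self)).not_gt
    (hag.rho_lt hgrow ha (hag.mem_c_of_hasRank p w _ hw hrw le_rfl) hrw haw)

lemma ROptimal.exists_exchange_of_bridge (hopt : ROptimal cfg (r + 1)) (ha : ∀ i, a ∉ cfg.A i)
    (hw : w ∈ cfg.c p) (hrw : HasRank cfg (r + 1) w) (hb : b ∈ reservoir G (cfg.A p) (v p) w)
    (hab : G.Adj a b) (hlow : ∀ s ≤ r, ¬ AdjReservoirOfRank cfg s a) :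
    ∃ cfg' : Config G k v m, ROptimal cfg' r ∧ AgreesUpTo cfg cfg' r ∧ (∀ i, w ∉ cfg'.A i) ∧
      ∀ i, i ≠ p → cfg'.A i = cfg.A i := by
  have hvalid := hopt.valid
  obtain ⟨hwA, hwv⟩ := cfg.c_mem p w hw
  have hR := hopt.reservoir_eq_diff ha hw hrw hb hab fun s hs => hlow s (by omega)
  have hconn : (G.induce (insert a (cfg.A p \ {w}))).Connected :=
    hR ▸ (connected_induce_reservoir (cfg.hmem p) hwv.symm).induce_insert hb hab.symm
  have hlow' : ∀ y ∈ cfg.c p, ∀ s < r + 1, HasRank cfg s y →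
      w ∉ reservoir G (cfg.A p) (v p) y ∧ ∀ u ∈ reservoir G (cfg.A p) (v p) y, ¬ G.Adj a u :=
    fun y hy s hs hry => ⟨(hvalid.reservoir_subset_of_lt hy hw hry hrw hs).2,
      fun u hu hau => hlow s (by omega) ⟨p, y, hy, hry, u, hu, hau⟩⟩
  obtain ⟨cfg', hA', hag⟩ := hvalid.exists_exchange (N := r) (cfg.ne_zero_of_mem_c hw) hwA hwv ha
    hconn (fun y _ s hs hry hyw => absurd (hry.unique (hyw ▸ hrw)) (by omega))
    fun y hy s hs => hlow' y hy s (by omega)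
  refine ⟨cfg', hopt.1.of_rho_eq (hag.valid hvalid) fun s hs => hag.rho_eq hs fun i y hy hry => ?_,
    hag, fun i => hA' ▸ notMem_update_insert_diff cfg.disj hwA (ha p) i,
    fun i hi => by rw [hA', Function.update_of_ne hi]⟩
  have hy' := (hag.sublist i).subset hy
  rw [hA']
  exact cfg.reservoir_update_insert_diff hy' fun hi => hlow' y (hi ▸ hy') s (by omega) hry

theorem canGrowFirstPart_of_adjReservoirOfRank (r : ℕ) : ∀ (cfg : Config G k v m),
    ROptimal cfg r → ∀ a, (∀ i, a ∉ cfg.A i) → AdjReservoirOfRank cfg r a →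
      CanGrowFirstPart G v m := by
  induction r using Nat.strong_induction_on with | _ r ih => ?_
  intro cfg hopt a ha hbridge
  by_cases hlow : ∃ s < r, AdjReservoirOfRank cfg s a
  · obtain ⟨s, hs, hbridge⟩ := hlow
    exact ih s hs cfg (hopt.mono hs.le) a ha hbridge
  push Not at hlow
  obtain ⟨p, w, hw, hrw, b, hb, hab⟩ := hbridge
  obtain ⟨r, rfl⟩ : ∃ r', r = r' + 1 :=
    Nat.exists_eq_add_one_of_ne_zero (by rintro rfl; exact not_hasRank_zero hrw)
  obtain ⟨cfg', hopt', hag, hw', hA'⟩ :=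
    hopt.exists_exchange_of_bridge ha hw hrw hb hab fun s hs => hlow s (by omega)
  rcases r with _ | t
  · obtain ⟨-, u, hu, hwu⟩ := hasRank_one_iff.mp hrw
    exact cfg'.canGrowFirstPart_of_adj hw' (hag.A_zero ▸ hu) hwu.symm
  · obtain ⟨i, q, hiq, hwi, w', hw'q, hrw', u, hu, hwu⟩ := (hasRank_add_two_iff.mp hrw).2.2.1
    have hqp : q ≠ p := Config.eq_of_mem_c hwi hw ▸ hiq.symm
    exact ih (t + 1) (by omega) cfg' hopt' w hw' ⟨q, w', hag.mem_c_of_hasRank q w' _ hw'q hrw'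
      le_rfl, (hag.hasRank_iff _ le_rfl w').mpr hrw', u, (hA' q hqp).symm ▸ hu, hwu⟩

theorem optimal_with_bridge_general {V : Type} [Fintype V]
    (G : SimpleGraph V) (k : ℕ) [NeZero k]
    (v : Fin k → V)
    (m : Fin k → ℕ)
    (cfg : Config G k v m) (hopt : Optimal cfg)
    (hbridge : ∃ a b, IsBridgeEdge cfg a b) :
    ∃ B : Fin k → Set V,
      (Pairwise fun i j => Disjoint (B i) (B j)) ∧
      (∀ i, (G.induce (B i)).Connected) ∧
      (∀ i, v i ∈ B i) ∧
      (B 0).ncard = m 0 + 1 ∧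
      (∀ i, i ≠ 0 → (B i).ncard = m i) := by
  obtain ⟨a, b, hab, ha, i, w, hw, hb⟩ := hbridge
  obtain ⟨r, hrw⟩ := (hopt 0).1 w ⟨i, hw⟩
  exact canGrowFirstPart_of_adjReservoirOfRank r cfg (hopt r) a ha ⟨i, w, hw, hrw, b, hb, hab⟩

/-- **Lemma 1 of Hoyer–Thomas.**  In the setting of Theorem 2, if there is an
optimal configuration containing a bridge, then `G` has pairwise vertex-disjoint
connected subgraphs `B 0, …, B (k-1)` with `v i ∈ B i`, where `B 0` has exactly
`m 0 + 1` vertices and `B i` has exactly `m i` vertices for `i ≠ 0`. -/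
theorem optimal_with_bridge {V : Type} [Fintype V]
    (G : SimpleGraph V) (k : ℕ) [NeZero k] (hk : 2 ≤ k)
    (hconn : KConnected G k)
    (v : Fin k → V) (hv : Function.Injective v)
    (m : Fin k → ℕ) (hm : ∀ i, 0 < m i)
    (hsum : ∑ i, m i < Fintype.card V)
    (A : Fin k → Set V)
    (hdisj : Pairwise fun i j => Disjoint (A i) (A j))
    (hconnA : ∀ i, (G.induce (A i)).Connected)
    (hvA : ∀ i, v i ∈ A i)
    (hcardA : ∀ i, (A i).ncard = m i)
    (cfg : Config G k v m) (hopt : Optimal cfg)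
    (hbridge : ∃ a b, IsBridgeEdge cfg a b) :
    ∃ B : Fin k → Set V,
      (Pairwise fun i j => Disjoint (B i) (B j)) ∧
      (∀ i, (G.induce (B i)).Connected) ∧
      (∀ i, v i ∈ B i) ∧
      (B 0).ncard = m 0 + 1 ∧
      (∀ i, i ≠ 0 → (B i).ncard = m i) :=
  optimal_with_bridge_general G k v m cfg hopt hbridge
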